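/- arXiv:1909.06545 — 2 statements merged into one kernel-verified Lean document; each statement's English description precedes it below -/
import Mathlib

section
/- Suppose G is a (2,l)-sparse multigraph with a triangle T with boundary walk v₁,e₁,v₂,e₂,v₃,e₃,v₁ (v₁ ≠ v₂, e₁ ≠ e₂), and the contraction G_{T,e₁} = (G/e₁) - e₂ is not (2,l)-sparse. Then there exists a subgraph H of G containing e₁ but not containing v₃ with γ(H) = l. -/
/-- A finite multigraph: each edge is incident to an unordered pair of vertices
(loops and parallel edges allowed). -/
structure MGraph (V E : Type) where
  inc : E → Sym2 V

namespace MGraph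

variable {V E : Type} [DecidableEq V] [DecidableEq E]

/-- A subgraph of a multigraph: a set of vertices and a set of edges whose
endpoints all lie in the vertex set. -/
structure Sub (G : MGraph V E) where
  verts : Finset V
  edges : Finset E
  compat : ∀ e ∈ edges, ∀ v ∈ G.inc e, v ∈ verts

variable {G : MGraph V E}

/-- γ(H) = 2|V(H)| - |E(H)|. -/
def Sub.gamma (H : G.Sub) : ℤ := 2 * H.verts.card - H.edges.card

def Sub.union (H K : G.Sub) : G.Sub where
  verts := H.verts ∪ K.verts
  edges := H.edges ∪ K.edges
  compat := by
    intro e he v hv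
    rcases Finset.mem_union.1 he with h | h
    · exact Finset.mem_union.2 (Or.inl (H.compat e h v hv))
    · exact Finset.mem_union.2 (Or.inr (K.compat e h v hv))

def Sub.inter (H K : G.Sub) : G.Sub where
  verts := H.verts ∩ K.verts
  edges := H.edges ∩ K.edges
  compat := by
    intro e he v hv
    rcases Finset.mem_inter.1 he with ⟨h1, h2⟩
    exact Finset.mem_inter.2 ⟨H.compat e h1 v hv, K.compat e h2 v hv⟩

/-- Subgraph containment. -/
def Sub.le (H K : G.Sub) : Prop := H.verts ⊆ K.verts ∧ H.edges ⊆ K.edges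

/-- H is (2,l)-sparse: every nonempty subgraph K of H has γ(K) ≥ l. -/
def Sparse (l : ℤ) (H : G.Sub) : Prop :=
  ∀ K : G.Sub, K.le H → K.verts.Nonempty → l ≤ K.gamma

/-- H is (2,l)-tight: (2,l)-sparse and γ(H) = l. -/
def Tight (l : ℤ) (H : G.Sub) : Prop := Sparse l H ∧ H.gamma = l

/-- The whole graph, as a subgraph of itself. -/
def top (G : MGraph V E) [Fintype V] [Fintype E] : G.Sub where
  verts := Finset.univ
  edges := Finset.univ
  compat := fun _ _ v _ => Finset.mem_univ v

/-- Adjacency within a subgraph. -/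
def Sub.Adj (H : G.Sub) (u w : V) : Prop := ∃ e ∈ H.edges, G.inc e = s(u, w)

/-- A subgraph is connected if any two of its vertices are joined by a walk in it. -/
def Sub.Connected (H : G.Sub) : Prop :=
  ∀ u ∈ H.verts, ∀ w ∈ H.verts, Relation.ReflTransGen H.Adj u w

/-- The graph obtained from `G` by identifying the vertex `b` with the vertex `a`
and deleting the two edges `f` and `g`. -/
def contractDel (G : MGraph V E) (a b : V) (hab : a ≠ b) (f g : E) :
    MGraph {v : V // v ≠ b} {e : E // e ≠ f ∧ e ≠ g} where
  inc e := (G.inc e.1).map fun v => if hv : v = b then ⟨a, hab⟩ else ⟨v, hv⟩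

/-- Add a single new edge joining `u` and `v`. -/
def addEdge (G : MGraph V E) (u v : V) : MGraph V (Option E) where
  inc := fun e? => e?.elim s(u, v) G.inc

end MGraph


/-
A nonempty subgraph `K` of the contraction with `γ(K) < l` must contain the merged vertex `v₁`:
otherwise it is already a subgraph of `G` with the same count, against sparsity of `G`. Splitting
`v₁` back into `v₁, v₂` and restoring `e₁` raises `γ` by exactly one, giving a subgraph `H` of `G`
with `l ≤ γ(H) = γ(K) + 1 ≤ l`. A subgraph with `γ(H) = l` in a sparse graph contains every edge
spanned by its vertices, since adding one would drop `γ` below `l`; as `e₂ ∉ H`, this rules out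
`v₃ ∈ H`.
-/

namespace MGraph

variable {V E : Type} {G : MGraph V E} {l : ℤ}

theorem sparse_top_iff [Fintype V] [Fintype E] :
    Sparse l (top G) ↔ ∀ H : G.Sub, H.verts.Nonempty → l ≤ H.gamma :=
  ⟨fun h H => h H ⟨Finset.subset_univ _, Finset.subset_univ _⟩, fun h H _ => h H⟩

namespace Sub

section InsertEdge

variable [DecidableEq E]

def insertEdge (H : G.Sub) (e : E) (he : ∀ v ∈ G.inc e, v ∈ H.verts) : G.Sub where
  verts := H.verts
  edges := insert e H.edges
  compat f hf := by
    rcases Finset.mem_insert.1 hf with rfl | hf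
    exacts [he, H.compat f hf]

theorem gamma_insertEdge (H : G.Sub) {e : E} (he : ∀ v ∈ G.inc e, v ∈ H.verts)
    (heH : e ∉ H.edges) : (H.insertEdge e he).gamma = H.gamma - 1 := by
  simp only [gamma, insertEdge, Finset.card_insert_of_notMem heH]
  push_cast
  ring

theorem mem_edges_of_gamma_eq [Fintype V] [Fintype E] (hsp : Sparse l (top G)) {H : G.Sub}
    (hne : H.verts.Nonempty) (hH : H.gamma = l) {e : E} (he : ∀ v ∈ G.inc e, v ∈ H.verts) :
    e ∈ H.edges := by
  by_contra heH
  have := sparse_top_iff.1 hsp (H.insertEdge e he) hne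
  rw [gamma_insertEdge H he heH] at this
  omega

end InsertEdge

section Contraction

variable [DecidableEq V] {a b : V} {hab : a ≠ b} {f g : E} (K : (G.contractDel a b hab f g).Sub)

def liftVerts : Finset V := K.verts.map (Function.Embedding.subtype _)

def liftEdges : Finset E := K.edges.map (Function.Embedding.subtype _)

theorem card_liftVerts : K.liftVerts.card = K.verts.card := Finset.card_map _

theorem card_liftEdges : K.liftEdges.card = K.edges.card := Finset.card_map _

theorem notMem_liftVerts : b ∉ K.liftVerts := by
  simp [liftVerts]

theorem left_notMem_liftEdges : f ∉ K.liftEdges := by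
  simp [liftEdges]

theorem right_notMem_liftEdges : g ∉ K.liftEdges := by
  simp [liftEdges]

theorem mem_liftVerts_of_mem_inc {e : E} (he : e ∈ K.liftEdges) {v : V} (hv : v ∈ G.inc e) :
    v ∈ K.liftVerts ∨ v = b ∧ ⟨a, hab⟩ ∈ K.verts := by
  obtain ⟨e, heK, rfl⟩ := Finset.mem_map.1 he
  have hmem := K.compat e heK _ (Sym2.mem_map.2 ⟨v, hv, rfl⟩)
  by_cases hvb : v = b
  · exact Or.inr ⟨hvb, by simpa [hvb] using hmem⟩
  · exact Or.inl (Finset.mem_map.2 ⟨⟨v, hvb⟩, by simpa [hvb] using hmem, rfl⟩)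

def liftOfNotMem (ha : ⟨a, hab⟩ ∉ K.verts) : G.Sub where
  verts := K.liftVerts
  edges := K.liftEdges
  compat _ he _ hv := (K.mem_liftVerts_of_mem_inc he hv).resolve_right fun h => ha h.2

theorem gamma_liftOfNotMem (ha : ⟨a, hab⟩ ∉ K.verts) : (K.liftOfNotMem ha).gamma = K.gamma := by
  simp only [gamma, liftOfNotMem, card_liftVerts, card_liftEdges]

theorem mem_verts_of_gamma_lt [Fintype V] [Fintype E] (hsp : Sparse l (top G))
    (hne : K.verts.Nonempty) (hK : K.gamma < l) : ⟨a, hab⟩ ∈ K.verts := by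
  by_contra ha
  have := sparse_top_iff.1 hsp (K.liftOfNotMem ha) hne.map
  rw [K.gamma_liftOfNotMem ha] at this
  omega

variable [DecidableEq E]

def lift (hf : G.inc f = s(a, b)) (ha : ⟨a, hab⟩ ∈ K.verts) : G.Sub where
  verts := insert b K.liftVerts
  edges := insert f K.liftEdges
  compat e he v hv := by
    rcases Finset.mem_insert.1 he with rfl | he
    · rw [hf, Sym2.mem_iff] at hv
      rcases hv with rfl | rfl
      · exact Finset.mem_insert_of_mem (Finset.mem_map_of_mem _ ha)
      · exact Finset.mem_insert_self _ _
    · rcases K.mem_liftVerts_of_mem_inc he hv with hv | ⟨rfl, -⟩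
      · exact Finset.mem_insert_of_mem hv
      · exact Finset.mem_insert_self _ _

variable (hf : G.inc f = s(a, b)) (ha : ⟨a, hab⟩ ∈ K.verts)

theorem gamma_lift : (K.lift hf ha).gamma = K.gamma + 1 := by
  simp only [gamma, lift, Finset.card_insert_of_notMem K.notMem_liftVerts,
    Finset.card_insert_of_notMem K.left_notMem_liftEdges, card_liftVerts, card_liftEdges]
  push_cast
  ring

theorem right_notMem_edges_lift (hfg : f ≠ g) : g ∉ (K.lift hf ha).edges := by
  simp only [lift, Finset.mem_insert, not_or]
  exact ⟨hfg.symm, K.right_notMem_liftEdges⟩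

end Contraction

end Sub

end MGraph

theorem triangle_contraction_blocker_general {V E : Type} [DecidableEq V] [DecidableEq E]
    [Fintype V] [Fintype E] (G : MGraph V E) (l : ℤ)
    (v₁ v₂ v₃ : V) (e₁ e₂ : E) (hv : v₁ ≠ v₂) (he : e₁ ≠ e₂)
    (i1 : G.inc e₁ = s(v₁, v₂)) (i2 : G.inc e₂ = s(v₂, v₃))
    (hsp : MGraph.Sparse l (MGraph.top G))
    (hns : ¬ MGraph.Sparse l (MGraph.top (G.contractDel v₁ v₂ hv e₁ e₂))) :
    ∃ H : G.Sub, e₁ ∈ H.edges ∧ v₃ ∉ H.verts ∧ H.gamma = l := by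
  obtain ⟨K, hKne, hKl⟩ : ∃ K : (G.contractDel v₁ v₂ hv e₁ e₂).Sub,
      K.verts.Nonempty ∧ K.gamma < l := by
    simpa [MGraph.sparse_top_iff] using hns
  have hv₁ := K.mem_verts_of_gamma_lt hsp hKne hKl
  set H := K.lift i1 hv₁
  have hHne : H.verts.Nonempty := ⟨v₂, Finset.mem_insert_self _ _⟩
  have hH : H.gamma = l := by
    have := MGraph.sparse_top_iff.1 hsp H hHne
    rw [K.gamma_lift] at this ⊢
    omega
  refine ⟨H, Finset.mem_insert_self _ _, fun hv₃ => ?_, hH⟩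
  refine K.right_notMem_edges_lift i1 hv₁ he (MGraph.Sub.mem_edges_of_gamma_eq hsp hHne hH ?_)
  intro v hv
  rw [i2, Sym2.mem_iff] at hv
  rcases hv with rfl | rfl
  exacts [Finset.mem_insert_self _ _, hv₃]

/-- triangle blocker.  If `G` is (2,l)-sparse with a triangle
`v₁,e₁,v₂,e₂,v₃,e₃,v₁` (v₁ ≠ v₂, e₁ ≠ e₂), and the contraction
`G_{T,e₁} = (G/e₁) - e₂` (identify v₂ with v₁, delete e₁ and e₂) is not
(2,l)-sparse, then there is a subgraph `H` of `G` containing `e₁`, not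
containing `v₃`, with γ(H) = l. -/
theorem triangle_contraction_blocker {V E : Type} [DecidableEq V] [DecidableEq E]
    [Fintype V] [Fintype E] (G : MGraph V E) (l : ℤ) (hl : l ≤ 2)
    (v₁ v₂ v₃ : V) (e₁ e₂ e₃ : E) (hv : v₁ ≠ v₂) (he : e₁ ≠ e₂)
    (i1 : G.inc e₁ = s(v₁, v₂)) (i2 : G.inc e₂ = s(v₂, v₃)) (i3 : G.inc e₃ = s(v₃, v₁))
    (hsp : MGraph.Sparse l (MGraph.top G))
    (hns : ¬ MGraph.Sparse l (MGraph.top (G.contractDel v₁ v₂ hv e₁ e₂))) :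
    ∃ H : G.Sub, e₁ ∈ H.edges ∧ v₃ ∉ H.verts ∧ H.gamma = l :=
  triangle_contraction_blocker_general G l v₁ v₂ v₃ e₁ e₂ hv he i1 i2 hsp hns
end

section
/- Let G be a (2,2)-sparse multigraph with a triangle face T with distinct vertices v₁, v₂, v₃ and edges e₁ (joining v₁,v₂), e₂ (joining v₂,v₃), e₃ (joining v₃,v₁). Then at least two of the three contracted graphs G_{T,e₁}, G_{T,e₂}, G_{T,e₃} are (2,2)-sparse. -/
namespace MGraph

variable {V E : Type} [DecidableEq V] [DecidableEq E]

variable {G : MGraph V E}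

lemma Sub.le_top [Fintype V] [Fintype E] (H : G.Sub) : H.le (top G) :=
  ⟨fun _ _ => Finset.mem_univ _, fun _ _ => Finset.mem_univ _⟩

lemma gamma_union_add_inter (H K : G.Sub) :
    (H.union K).gamma + (H.inter K).gamma = H.gamma + K.gamma := by
  have h1 := Finset.card_union_add_card_inter H.verts K.verts
  have h2 := Finset.card_union_add_card_inter H.edges K.edges
  have h1' : ((H.verts ∪ K.verts).card : ℤ) + (H.verts ∩ K.verts).card
      = H.verts.card + K.verts.card := by exact_mod_cast h1
  have h2' : ((H.edges ∪ K.edges).card : ℤ) + (H.edges ∩ K.edges).card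
      = H.edges.card + K.edges.card := by exact_mod_cast h2
  simp only [Sub.gamma, Sub.union, Sub.inter]
  linarith

/-- If two blockers exist for two of the contractions, we contradict sparsity. -/
lemma no_two_blockers [Fintype V] [Fintype E] (x y z : V) (e : E)
    (hinc : G.inc e = s(z, x)) (hsp : Sparse 2 (top G))
    (H1 H2 : G.Sub) (h1 : H1.gamma ≤ 2) (hx1 : x ∈ H1.verts) (hy1 : y ∈ H1.verts)
    (hz1 : z ∉ H1.verts)
    (h2 : H2.gamma ≤ 2) (hy2 : y ∈ H2.verts) (hz2 : z ∈ H2.verts)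
    (hx2 : x ∉ H2.verts) : False := by
  have hzmem : z ∈ G.inc e := by rw [hinc]; exact Sym2.mem_mk_left _ _
  have hxmem : x ∈ G.inc e := by rw [hinc]; exact Sym2.mem_mk_right _ _
  have hinter : 2 ≤ (H1.inter H2).gamma := by
    refine hsp _ (Sub.le_top _) ⟨y, ?_⟩
    exact Finset.mem_inter.2 ⟨hy1, hy2⟩
  have hU : (H1.union H2).gamma ≤ 2 := by
    have := gamma_union_add_inter H1 H2
    linarith
  have heU : e ∉ (H1.union H2).edges := by
    intro he
    rcases Finset.mem_union.1 he with h | h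
    · exact hz1 (H1.compat e h z hzmem)
    · exact hx2 (H2.compat e h x hxmem)
  let U' : G.Sub :=
    { verts := (H1.union H2).verts
      edges := insert e (H1.union H2).edges
      compat := by
        intro e' he' v hv
        rcases Finset.mem_insert.1 he' with rfl | he'
        · rw [hinc] at hv
          rcases Sym2.mem_iff.1 hv with rfl | rfl
          · exact Finset.mem_union.2 (Or.inr hz2)
          · exact Finset.mem_union.2 (Or.inl hx1)
        · exact (H1.union H2).compat e' he' v hv }
  have hcard : (U'.edges.card : ℤ) = (H1.union H2).edges.card + 1 := by
    have := Finset.card_insert_of_notMem heU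
    exact_mod_cast this
  have hγ : U'.gamma ≤ 1 := by
    simp only [Sub.gamma] at hU ⊢
    rw [hcard]
    have : U'.verts = (H1.union H2).verts := rfl
    rw [this]
    linarith
  have := hsp U' (Sub.le_top _) ⟨y, Finset.mem_union.2 (Or.inl hy1)⟩
  linarith

/-- If a contraction fails to be sparse, we get a blocker in `G`. -/
lemma blocker [Fintype V] [Fintype E] (a b c : V) (f g : E) (hab : a ≠ b)
    (hf : G.inc f = s(a, b)) (hg : G.inc g = s(b, c)) (hfg : f ≠ g)
    (hsp : Sparse 2 (top G))
    (hfail : ¬ Sparse 2 (top (G.contractDel a b hab f g))) :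
    ∃ H : G.Sub, H.gamma ≤ 2 ∧ a ∈ H.verts ∧ b ∈ H.verts ∧ c ∉ H.verts := by
  simp only [Sparse, not_forall] at hfail
  obtain ⟨K, -, hne, hK⟩ := hfail
  push_neg at hK
  -- pulled-back vertex and edge sets
  set Vimg : Finset V := K.verts.image Subtype.val with hVimg
  set Eimg : Finset E := K.edges.image Subtype.val with hEimg
  have hVcard : Vimg.card = K.verts.card :=
    Finset.card_image_of_injective _ Subtype.val_injective
  have hEcard : Eimg.card = K.edges.card :=
    Finset.card_image_of_injective _ Subtype.val_injective
  have hbV : b ∉ Vimg := by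
    intro hb
    obtain ⟨⟨v, hv⟩, -, heq⟩ := Finset.mem_image.1 hb
    exact hv heq
  have hfE : f ∉ Eimg := by
    intro hfmem
    obtain ⟨⟨e', he'⟩, -, heq⟩ := Finset.mem_image.1 hfmem
    exact he'.1 heq
  have hgE : g ∉ Eimg := by
    intro hgmem
    obtain ⟨⟨e', he'⟩, -, heq⟩ := Finset.mem_image.1 hgmem
    exact he'.2 heq
  -- generic pullback of endpoint membership
  have key : ∀ e' ∈ K.edges, ∀ v ∈ G.inc (e' : E),
      (v = b ∧ (⟨a, hab⟩ : {v : V // v ≠ b}) ∈ K.verts) ∨ v ∈ Vimg := by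
    intro e' he' v hv
    have hmem : Sym2.Mem ((fun w => if hw : w = b then (⟨a, hab⟩ : {v : V // v ≠ b})
        else ⟨w, hw⟩) v) ((G.contractDel a b hab f g).inc e') := by
      simp only [contractDel]
      exact Sym2.mem_map.2 ⟨v, hv, rfl⟩
    have hKmem := K.compat e' he' _ hmem
    by_cases hvb : v = b
    · subst hvb
      simp only [dif_pos rfl] at hKmem
      exact Or.inl ⟨rfl, hKmem⟩
    · right
      simp only [dif_neg hvb] at hKmem
      exact Finset.mem_image.2 ⟨⟨v, hvb⟩, hKmem, rfl⟩
  by_cases hA : (⟨a, hab⟩ : {v : V // v ≠ b}) ∈ K.verts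
  · -- pullback plus the vertex b and the edge f
    let H : G.Sub :=
      { verts := insert b Vimg
        edges := insert f Eimg
        compat := by
          intro e' he' v hv
          rcases Finset.mem_insert.1 he' with rfl | he'
          · rw [hf] at hv
            rcases Sym2.mem_iff.1 hv with rfl | rfl
            · exact Finset.mem_insert_of_mem (Finset.mem_image.2 ⟨⟨v, hab⟩, hA, rfl⟩)
            · exact Finset.mem_insert_self _ _
          · obtain ⟨e'', he'', rfl⟩ := Finset.mem_image.1 he'
            rcases key e'' he'' v hv with ⟨rfl, -⟩ | hvm
            · exact Finset.mem_insert_self _ _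
            · exact Finset.mem_insert_of_mem hvm }
    have hHv : H.verts.card = K.verts.card + 1 := by
      rw [show H.verts = insert b Vimg from rfl, Finset.card_insert_of_notMem hbV, hVcard]
    have hHe : H.edges.card = K.edges.card + 1 := by
      rw [show H.edges = insert f Eimg from rfl, Finset.card_insert_of_notMem hfE, hEcard]
    have hHγ : H.gamma ≤ 2 := by
      simp only [Sub.gamma, hHv, hHe]
      simp only [Sub.gamma] at hK
      push_cast
      push_cast at hK
      linarith
    have haH : a ∈ H.verts :=
      Finset.mem_insert_of_mem (Finset.mem_image.2 ⟨⟨a, hab⟩, hA, rfl⟩)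
    have hbH : b ∈ H.verts := Finset.mem_insert_self _ _
    refine ⟨H, hHγ, haH, hbH, ?_⟩
    -- c cannot be in H, else adding g violates sparsity
    intro hcH
    have hgH : g ∉ H.edges := by
      intro hgmem
      rcases Finset.mem_insert.1 hgmem with rfl | hgmem
      · exact hfg rfl
      · exact hgE hgmem
    let H' : G.Sub :=
      { verts := H.verts
        edges := insert g H.edges
        compat := by
          intro e' he' v hv
          rcases Finset.mem_insert.1 he' with rfl | he'
          · rw [hg] at hv
            rcases Sym2.mem_iff.1 hv with rfl | rfl
            · exact hbH
            · exact hcH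
          · exact H.compat e' he' v hv }
    have hγ' : H'.gamma ≤ 1 := by
      have hc : H'.edges.card = H.edges.card + 1 := Finset.card_insert_of_notMem hgH
      simp only [Sub.gamma, hc] at hHγ ⊢
      push_cast
      push_cast at hHγ
      linarith
    have := hsp H' (Sub.le_top _) ⟨b, hbH⟩
    linarith
  · -- direct contradiction: the pullback itself violates sparsity of G
    exfalso
    let H0 : G.Sub :=
      { verts := Vimg
        edges := Eimg
        compat := by
          intro e' he' v hv
          obtain ⟨e'', he'', rfl⟩ := Finset.mem_image.1 he'
          rcases key e'' he'' v hv with ⟨-, hmem⟩ | hvm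
          · exact absurd hmem hA
          · exact hvm }
    have hγ0 : H0.gamma < 2 := by
      simp only [Sub.gamma, hVcard, hEcard] at *
      exact (show (2:ℤ) * (Vimg.card : ℤ) - (Eimg.card : ℤ) < 2 by rw [show Vimg.card = K.verts.card from Finset.card_image_of_injective _ Subtype.val_injective, show Eimg.card = K.edges.card from Finset.card_image_of_injective _ Subtype.val_injective]; exact hK)
    have hne0 : H0.verts.Nonempty := by
      obtain ⟨w, hw⟩ := hne
      exact ⟨w.val, Finset.mem_image.2 ⟨w, hw, rfl⟩⟩
    have := hsp H0 (Sub.le_top _) hne0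
    linarith

end MGraph

/-- for a triangle face `T` of a (2,2)-sparse multigraph, with distinct
vertices v₁, v₂, v₃ and distinct edges e₁ (joining v₁,v₂), e₂ (joining v₂,v₃),
e₃ (joining v₃,v₁), at least two of the three contractions
`G_{T,e₁}, G_{T,e₂}, G_{T,e₃}` are (2,2)-sparse. -/
theorem triangle_two_contractions_sparse {V E : Type} [DecidableEq V] [DecidableEq E]
    [Fintype V] [Fintype E] (G : MGraph V E)
    (v₁ v₂ v₃ : V) (e₁ e₂ e₃ : E)
    (hv12 : v₁ ≠ v₂) (hv23 : v₂ ≠ v₃) (hv31 : v₃ ≠ v₁)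
    (he12 : e₁ ≠ e₂) (he23 : e₂ ≠ e₃) (he31 : e₃ ≠ e₁)
    (i1 : G.inc e₁ = s(v₁, v₂)) (i2 : G.inc e₂ = s(v₂, v₃)) (i3 : G.inc e₃ = s(v₃, v₁))
    (hsp : MGraph.Sparse 2 (MGraph.top G)) :
    (MGraph.Sparse 2 (MGraph.top (G.contractDel v₁ v₂ hv12 e₁ e₂)) ∧
     MGraph.Sparse 2 (MGraph.top (G.contractDel v₂ v₃ hv23 e₂ e₃))) ∨
    (MGraph.Sparse 2 (MGraph.top (G.contractDel v₁ v₂ hv12 e₁ e₂)) ∧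
     MGraph.Sparse 2 (MGraph.top (G.contractDel v₃ v₁ hv31 e₃ e₁))) ∨
    (MGraph.Sparse 2 (MGraph.top (G.contractDel v₂ v₃ hv23 e₂ e₃)) ∧
     MGraph.Sparse 2 (MGraph.top (G.contractDel v₃ v₁ hv31 e₃ e₁))) := by
  by_cases hA : MGraph.Sparse 2 (MGraph.top (G.contractDel v₁ v₂ hv12 e₁ e₂))
  · by_cases hB : MGraph.Sparse 2 (MGraph.top (G.contractDel v₂ v₃ hv23 e₂ e₃))
    · exact Or.inl ⟨hA, hB⟩
    · by_cases hC : MGraph.Sparse 2 (MGraph.top (G.contractDel v₃ v₁ hv31 e₃ e₁))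
      · exact Or.inr (Or.inl ⟨hA, hC⟩)
      · exfalso
        obtain ⟨H1, h1, ha1, hb1, hc1⟩ :=
          MGraph.blocker v₂ v₃ v₁ e₂ e₃ hv23 i2 i3 he23 hsp hB
        obtain ⟨H2, h2, ha2, hb2, hc2⟩ :=
          MGraph.blocker v₃ v₁ v₂ e₃ e₁ hv31 i3 i1 he31 hsp hC
        exact MGraph.no_two_blockers v₂ v₃ v₁ e₁ i1 hsp H1 H2 h1 ha1 hb1 hc1
          h2 ha2 hb2 hc2
  · by_cases hB : MGraph.Sparse 2 (MGraph.top (G.contractDel v₂ v₃ hv23 e₂ e₃))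
    · by_cases hC : MGraph.Sparse 2 (MGraph.top (G.contractDel v₃ v₁ hv31 e₃ e₁))
      · exact Or.inr (Or.inr ⟨hB, hC⟩)
      · exfalso
        obtain ⟨H1, h1, ha1, hb1, hc1⟩ :=
          MGraph.blocker v₁ v₂ v₃ e₁ e₂ hv12 i1 i2 he12 hsp hA
        obtain ⟨H2, h2, ha2, hb2, hc2⟩ :=
          MGraph.blocker v₃ v₁ v₂ e₃ e₁ hv31 i3 i1 he31 hsp hC
        exact MGraph.no_two_blockers v₂ v₁ v₃ e₂ (i2.trans (Sym2.eq_swap)) hsp H1 H2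
          h1 hb1 ha1 hc1 h2 hb2 ha2 hc2
    · exfalso
      obtain ⟨H1, h1, ha1, hb1, hc1⟩ :=
        MGraph.blocker v₁ v₂ v₃ e₁ e₂ hv12 i1 i2 he12 hsp hA
      obtain ⟨H2, h2, ha2, hb2, hc2⟩ :=
        MGraph.blocker v₂ v₃ v₁ e₂ e₃ hv23 i2 i3 he23 hsp hB
      exact MGraph.no_two_blockers v₁ v₂ v₃ e₃ i3 hsp H1 H2 h1 ha1 hb1 hc1
        h2 ha2 hb2 hc2
end
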